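/- arXiv:2512.17485 — 3 statements merged into one kernel-verified Lean document; each statement's English description precedes it below -/
import Mathlib

section
/- Let 0 < λ < 1, A(s) = ∫_0^s (λ-1)/(e^{λ(x-1)} - x) dx and B(s) = exp(A(s)) for s ∈ [0,1). Then B(0) = 1, B satisfies the differential equation B'(s)·(e^{λ(s-1)} − s) = (λ−1)·B(s) on [0,1), B is strictly decreasing on [0,1), and lim_{s→1⁻} B(s) = 0. -/
open Filter

/-- The Abel function of the subcritical (`0 < λ < 1`) Markov branching process with
Poisson(λ) reproduction. -/
noncomputable def abelA (lam : ℝ) (s : ℝ) : ℝ :=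
  ∫ x in (0:ℝ)..s, (lam - 1) / (Real.exp (lam * (x - 1)) - x)

/-- The Koenigs function `B(s) = exp (A(s))`. -/
noncomputable def koenigsB (lam : ℝ) (s : ℝ) : ℝ := Real.exp (abelA lam s)

/-!
`A' = (λ - 1)/(e^{λ(x-1)} - x)` is negative on `(-∞, 1)` because `e^{λ(x-1)} ≥ 1 + λ(x-1) > x`
there, which gives the differential equation and the monotonicity of `B = exp A`. For the limit,
`0 < e^{λ(x-1)} - x ≤ 1 - x` on `[0, 1)` yields `A(s) ≤ (1 - λ) log (1 - s)`, i.e.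
`0 < B(s) ≤ (1 - s)^{1-λ} → 0`.
-/

open Real Set

namespace KoenigsPoisson

variable {lam : ℝ}

theorem exp_mul_sub_one_sub_pos (h1 : lam < 1) {x : ℝ} (hx : x < 1) :
    0 < exp (lam * (x - 1)) - x := by
  nlinarith [add_one_le_exp (lam * (x - 1))]

theorem exp_mul_sub_one_sub_le (h0 : 0 ≤ lam) {x : ℝ} (hx : x ≤ 1) :
    exp (lam * (x - 1)) - x ≤ 1 - x := by
  have : exp (lam * (x - 1)) ≤ 1 := exp_le_one_iff.mpr (by nlinarith)
  linarith

theorem continuousOn_abelIntegrand (h1 : lam < 1) :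
    ContinuousOn (fun x => (lam - 1) / (exp (lam * (x - 1)) - x)) (Iio 1) :=
  continuousOn_const.div (by fun_prop) fun _ hx => (exp_mul_sub_one_sub_pos h1 hx).ne'

theorem hasDerivAt_abelA (h1 : lam < 1) {s : ℝ} (hs : s < 1) :
    HasDerivAt (abelA lam) ((lam - 1) / (exp (lam * (s - 1)) - s)) s := by
  have hcont := continuousOn_abelIntegrand h1
  have hsub : uIcc 0 s ⊆ Iio 1 := fun x hx => hx.2.trans_lt (max_lt one_pos hs)
  exact intervalIntegral.integral_hasDerivAt_right (hcont.mono hsub).intervalIntegrable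
    (hcont.stronglyMeasurableAtFilter isOpen_Iio s hs) (hcont.continuousAt (Iio_mem_nhds hs))

theorem hasDerivAt_koenigsB (h1 : lam < 1) {s : ℝ} (hs : s < 1) :
    HasDerivAt (koenigsB lam) (koenigsB lam s * ((lam - 1) / (exp (lam * (s - 1)) - s))) s :=
  (hasDerivAt_abelA h1 hs).exp

theorem koenigsB_zero : koenigsB lam 0 = 1 := by
  simp [koenigsB, abelA]

theorem strictAntiOn_koenigsB (h1 : lam < 1) : StrictAntiOn (koenigsB lam) (Iio 1) := by
  refine strictAntiOn_of_deriv_neg (convex_Iio 1)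
    (fun x hx => (hasDerivAt_koenigsB h1 hx).continuousAt.continuousWithinAt) fun x hx => ?_
  rw [interior_Iio] at hx
  rw [(hasDerivAt_koenigsB h1 hx).deriv]
  exact mul_neg_of_pos_of_neg (exp_pos _)
    (div_neg_of_neg_of_pos (by linarith) (exp_mul_sub_one_sub_pos h1 hx))

theorem integral_inv_one_sub {s : ℝ} (hs : s < 1) :
    ∫ x in (0:ℝ)..s, (1 - x)⁻¹ = -log (1 - s) := by
  rw [intervalIntegral.integral_comp_sub_left (fun x => x⁻¹) 1, sub_zero,
    integral_inv_of_pos (by linarith) one_pos, div_eq_mul_inv, one_mul, log_inv]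

theorem abelA_le_mul_log (h0 : 0 ≤ lam) (h1 : lam < 1) {s : ℝ} (hs0 : 0 ≤ s) (hs1 : s < 1) :
    abelA lam s ≤ (1 - lam) * log (1 - s) := by
  have hsub : uIcc 0 s ⊆ Iio 1 := by
    rw [uIcc_of_le hs0]
    exact fun x hx => hx.2.trans_lt hs1
  have hcmp : ContinuousOn (fun x : ℝ => (lam - 1) * (1 - x)⁻¹) (uIcc 0 s) :=
    continuousOn_const.mul <| (continuousOn_const.sub continuousOn_id).inv₀ fun x hx =>
      (sub_pos.2 (hsub hx)).ne'
  calc abelA lam s ≤ ∫ x in (0:ℝ)..s, (lam - 1) * (1 - x)⁻¹ := by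
        refine intervalIntegral.integral_mono_on hs0
          ((continuousOn_abelIntegrand h1).mono hsub).intervalIntegrable
          hcmp.intervalIntegrable fun x hx => ?_
        have hx1 : x < 1 := hx.2.trans_lt hs1
        rw [div_eq_mul_inv]
        exact mul_le_mul_of_nonpos_left (inv_anti₀ (exp_mul_sub_one_sub_pos h1 hx1)
          (exp_mul_sub_one_sub_le h0 hx1.le)) (by linarith)
    _ = (1 - lam) * log (1 - s) := by
        rw [intervalIntegral.integral_const_mul, integral_inv_one_sub hs1]
        ring

theorem koenigsB_le_rpow (h0 : 0 ≤ lam) (h1 : lam < 1) {s : ℝ} (hs0 : 0 ≤ s) (hs1 : s < 1) :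
    koenigsB lam s ≤ (1 - s) ^ (1 - lam) := by
  rw [koenigsB, rpow_def_of_pos (by linarith), mul_comm]
  exact exp_le_exp.mpr (abelA_le_mul_log h0 h1 hs0 hs1)

theorem tendsto_koenigsB_nhdsLT_one (h0 : 0 ≤ lam) (h1 : lam < 1) :
    Tendsto (koenigsB lam) (nhdsWithin 1 (Iio 1)) (nhds 0) := by
  have hrpow : Tendsto (fun s : ℝ => (1 - s) ^ (1 - lam)) (nhdsWithin 1 (Iio 1)) (nhds 0) := by
    have : ContinuousAt (fun s : ℝ => (1 - s) ^ (1 - lam)) 1 :=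
      (continuousAt_rpow_const _ _ (Or.inr (by linarith))).comp (by fun_prop)
    simpa [zero_rpow (sub_pos.2 h1).ne'] using this.tendsto.mono_left nhdsWithin_le_nhds
  refine tendsto_of_tendsto_of_tendsto_of_le_of_le' tendsto_const_nhds hrpow
    (Eventually.of_forall fun s => (exp_pos _).le) ?_
  filter_upwards [Ioo_mem_nhdsLT one_pos] with s hs
  exact koenigsB_le_rpow h0 h1 hs.1.le hs.2

end KoenigsPoisson

open KoenigsPoisson in
/-- For `0 < λ < 1`, the Koenigs function `B` satisfies `B(0) = 1`, the
differential equation `B'(s)(e^{λ(s-1)} - s) = (λ-1)B(s)` on `[0,1)`, `B` is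
strictly decreasing on `[0,1)`, and `B(s) → 0` as `s → 1⁻`. -/
theorem koenigsB_properties (lam : ℝ) (h0 : 0 < lam) (h1 : lam < 1) :
    koenigsB lam 0 = 1 ∧
    (∀ s ∈ Set.Ico (0:ℝ) 1, ∃ B' : ℝ, HasDerivAt (koenigsB lam) B' s ∧
      B' * (Real.exp (lam * (s - 1)) - s) = (lam - 1) * koenigsB lam s) ∧
    StrictAntiOn (koenigsB lam) (Set.Ico 0 1) ∧
    Tendsto (koenigsB lam) (nhdsWithin 1 (Set.Iio 1)) (nhds 0) := by
  refine ⟨koenigsB_zero, fun s hs => ⟨_, hasDerivAt_koenigsB h1 hs.2, ?_⟩,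
    (strictAntiOn_koenigsB h1).mono fun x hx => hx.2, tendsto_koenigsB_nhdsLT_one h0.le h1⟩
  rw [mul_assoc, div_mul_cancel₀ _ (exp_mul_sub_one_sub_pos h1 hs.2).ne', mul_comm]
end

section
/- Let 0 < λ < 1, A(s) = ∫_0^s (λ−1)/(e^{λ(x-1)} − x) dx and B(s) = exp(A(s)) for s ∈ [0,1). Then the limit lim_{s→1⁻} B(s)/(1−s) exists, is finite and strictly positive, and equals exp( ∫_0^1 [ (λ−1)/(e^{λ(x-1)} − x) + 1/(1−x) ] dx ), the integrand being continuous on [0,1] after continuous extension at x=1. -/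
/-!
For `x < 1` and `λ < 1` we have `e^{λ(x-1)} ≥ 1 + λ(x-1) > x`, and over a common denominator
`(λ-1)/(e^{λ(x-1)} - x) + 1/(1-x) = (e^{λ(x-1)} - 1 - λ(x-1)) / ((e^{λ(x-1)} - x)(1-x))`.
With `t = x - 1` this is `((e^{λt} - 1 - λt)/t²) / (-(e^{λt} - 1 - t)/t)`, whose numerator tends
to `λ²/2` and whose denominator tends to `1 - λ`; so the integrand extends continuously to `[0,1]`.
Since `∫₀ˢ 1/(1-x) dx = -log(1-s)`, we get `B(s)/(1-s) = exp ∫₀ˢ (integrand)`, and the limit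
follows from the continuity of the primitive of a continuous function.
-/

open Filter

open Real Set Topology

lemma tendsto_exp_mul_sub_one_sub_mul_div (a b : ℝ) :
    Tendsto (fun t => (exp (a * t) - 1 - b * t) / t) (𝓝[≠] 0) (𝓝 (a - b)) := by
  have h : HasDerivAt (fun t => exp (a * t) - b * t) (a - b) 0 := by
    simpa using ((hasDerivAt_id' 0).const_mul a).exp.fun_sub ((hasDerivAt_id' 0).const_mul b)
  refine h.tendsto_slope_zero.congr fun t => ?_
  simp only [zero_add, mul_zero, exp_zero, sub_zero, smul_eq_mul]
  ring

lemma tendsto_exp_mul_sub_one_sub_mul_div_sq (c : ℝ) :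
    Tendsto (fun t => (exp (c * t) - 1 - c * t) / t ^ 2) (𝓝[≠] 0) (𝓝 (c ^ 2 / 2)) := by
  have hderiv : Tendsto (fun t => (c * exp (c * t) - c) / (2 * t)) (𝓝[≠] 0) (𝓝 (c ^ 2 / 2)) := by
    convert (tendsto_exp_mul_sub_one_sub_mul_div c 0).const_mul (c / 2) using 2 <;> ring
  refine HasDerivAt.lhopital_zero_nhdsNE (f' := fun t => c * exp (c * t) - c)
    (g' := fun t => 2 * t) ?_ ?_ ?_ ?_ ?_ hderiv
  · exact Eventually.of_forall fun t => ((((hasDerivAt_id' t).const_mul c).exp.sub_const 1).fun_sub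
      ((hasDerivAt_id' t).const_mul c)).congr_deriv (by ring)
  · exact Eventually.of_forall fun t => by simpa using hasDerivAt_pow 2 t
  · filter_upwards [self_mem_nhdsWithin] with t ht
    exact mul_ne_zero two_ne_zero ht
  · exact (Continuous.tendsto' (by fun_prop) 0 0 (by simp)).mono_left nhdsWithin_le_nhds
  · exact (Continuous.tendsto' (by fun_prop) 0 0 (by simp)).mono_left nhdsWithin_le_nhds

lemma tendsto_integral_nhdsLT_of_continuousOn {E : Type*} [NormedAddCommGroup E]
    [NormedSpace ℝ E] {f : ℝ → E} {a b : ℝ} (hab : a < b) (hf : ContinuousOn f (Icc a b)) :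
    Tendsto (fun s => ∫ x in a..s, f x) (𝓝[<] b) (𝓝 (∫ x in a..b, f x)) := by
  have hprim := intervalIntegral.continuousOn_primitive_interval (μ := MeasureTheory.volume)
    (uIcc_of_le hab.le ▸ hf.integrableOn_Icc) b right_mem_uIcc
  rw [uIcc_of_le hab.le] at hprim
  simpa [ContinuousWithinAt, nhdsWithin_Ico_eq_nhdsLT hab] using hprim.mono Ico_subset_Icc_self

lemma continuousOn_one_div_one_sub : ContinuousOn (fun x : ℝ => 1 / (1 - x)) (Iio 1) :=
  continuousOn_const.div (by fun_prop) fun _ hx => (sub_pos.2 hx).ne'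

lemma integral_one_div_one_sub {s : ℝ} (hs : s < 1) :
    ∫ x in (0:ℝ)..s, 1 / (1 - x) = log (1 / (1 - s)) := by
  have h0 : (0:ℝ) ∉ uIcc (1 - s) 1 := fun h =>
    (lt_min (sub_pos.2 hs) one_pos).not_ge (by simpa using h.1)
  have h := intervalIntegral.integral_comp_sub_left (fun x : ℝ => 1 / x) (1:ℝ) (a := 0) (b := s)
  rw [sub_zero] at h
  rw [h, integral_one_div h0]

lemma lt_exp_mul_sub_one {lam x : ℝ} (h1 : lam < 1) (hx : x < 1) : x < exp (lam * (x - 1)) := by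
  nlinarith [add_one_le_exp (lam * (x - 1)), mul_pos (sub_pos.2 h1) (sub_pos.2 hx)]

/-- The integrand of `G`, where `B(s) = (1 - s) e^{G(s)}`. -/
noncomputable def koenigsIntegrand (lam x : ℝ) : ℝ :=
  (lam - 1) / (exp (lam * (x - 1)) - x) + 1 / (1 - x)

section

variable {lam : ℝ}

lemma continuousOn_abelA_integrand (h1 : lam < 1) :
    ContinuousOn (fun x => (lam - 1) / (exp (lam * (x - 1)) - x)) (Iio 1) :=
  continuousOn_const.div (by fun_prop) fun _ hx => (sub_pos.2 (lt_exp_mul_sub_one h1 hx)).ne'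

lemma continuousOn_koenigsIntegrand (h1 : lam < 1) : ContinuousOn (koenigsIntegrand lam) (Iio 1) :=
  (continuousOn_abelA_integrand h1).add continuousOn_one_div_one_sub

lemma tendsto_koenigsIntegrand (h1 : lam < 1) :
    Tendsto (koenigsIntegrand lam) (𝓝[<] 1) (𝓝 (lam ^ 2 / (2 * (1 - lam)))) := by
  have hquot := (tendsto_exp_mul_sub_one_sub_mul_div_sq lam).div
    (tendsto_exp_mul_sub_one_sub_mul_div lam 1).neg (by linarith : -(lam - 1) ≠ 0)
  have hshift : Tendsto (fun x : ℝ => x - 1) (𝓝[<] 1) (𝓝[≠] 0) := by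
    refine tendsto_nhdsWithin_of_tendsto_nhds_of_eventually_within _ ?_ ?_
    · exact ((continuous_sub_right 1).tendsto' 1 0 (sub_self 1)).mono_left nhdsWithin_le_nhds
    · filter_upwards [self_mem_nhdsWithin] with x (hx : x < 1)
      exact sub_ne_zero.2 hx.ne
  convert (hquot.comp hshift).congr' ?_ using 2
  · have : lam - 1 ≠ 0 := (sub_neg.2 h1).ne
    have : 1 - lam ≠ 0 := (sub_pos.2 h1).ne'
    field_simp
    ring
  filter_upwards [self_mem_nhdsWithin] with x (hx : x < 1)
  simp only [Function.comp, Pi.div_apply, koenigsIntegrand]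
  have hφ := lt_exp_mul_sub_one h1 hx
  generalize exp (lam * (x - 1)) = E at hφ ⊢
  rw [show E - 1 - 1 * (x - 1) = E - x by ring]
  have hφ₁ : E - x ≠ 0 := by linarith
  have hx₁ : x - 1 ≠ 0 := by linarith
  have hx₂ : 1 - x ≠ 0 := by linarith
  field_simp
  ring

lemma koenigsB_div_one_sub_eq (h1 : lam < 1) {s : ℝ} (hs : s < 1) :
    koenigsB lam s / (1 - s) = exp (∫ x in (0:ℝ)..s, koenigsIntegrand lam x) := by
  have hsub : uIcc 0 s ⊆ Iio 1 := fun x hx => hx.2.trans_lt (max_lt one_pos hs)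
  unfold koenigsIntegrand
  rw [intervalIntegral.integral_add ((continuousOn_abelA_integrand h1).mono hsub).intervalIntegrable
    (continuousOn_one_div_one_sub.mono hsub).intervalIntegrable, integral_one_div_one_sub hs,
    exp_add, exp_log (one_div_pos.2 (sub_pos.2 hs)), koenigsB, abelA, div_eq_mul_one_div]

end

theorem koenigsB_div_one_sub_limit_general (lam : ℝ) (h1 : lam < 1) :
    ∃ F : ℝ → ℝ, ContinuousOn F (Set.Icc 0 1) ∧
      (∀ x ∈ Set.Ico (0:ℝ) 1,
        F x = (lam - 1) / (Real.exp (lam * (x - 1)) - x) + 1 / (1 - x)) ∧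
      ∃ L : ℝ, 0 < L ∧ L = Real.exp (∫ x in (0:ℝ)..1, F x) ∧
        Tendsto (fun s => koenigsB lam s / (1 - s)) (nhdsWithin 1 (Set.Iio 1)) (nhds L) := by
  set F := Function.update (koenigsIntegrand lam) 1 (lam ^ 2 / (2 * (1 - lam)))
  have hF : ∀ x < 1, F x = koenigsIntegrand lam x := fun x hx => Function.update_of_ne hx.ne _ _
  have hFcont : ContinuousOn F (Icc 0 1) := by
    refine continuousOn_update_iff.2 ⟨(continuousOn_koenigsIntegrand h1).mono ?_, fun _ => ?_⟩
    · exact fun x hx => lt_of_le_of_ne hx.1.2 hx.2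
    · rw [Icc_sdiff_right, nhdsWithin_Ico_eq_nhdsLT one_pos]
      exact tendsto_koenigsIntegrand h1
  refine ⟨F, hFcont, fun x hx => hF x hx.2, _, exp_pos _, rfl, ?_⟩
  refine ((continuous_exp.tendsto _).comp
    (tendsto_integral_nhdsLT_of_continuousOn one_pos hFcont)).congr' ?_
  filter_upwards [self_mem_nhdsWithin] with s (hs : s < 1)
  rw [Function.comp_apply, koenigsB_div_one_sub_eq h1 hs]
  exact congrArg exp (intervalIntegral.integral_congr fun x hx =>
    hF x (hx.2.trans_lt (max_lt one_pos hs)))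

/-- For `0 < λ < 1`, the limit `lim_{s→1⁻} B(s)/(1-s)` exists, is finite and
strictly positive, and equals `exp (∫_0^1 [(λ-1)/(e^{λ(x-1)} - x) + 1/(1-x)] dx)`,
the integrand being continuous on `[0,1]` after continuous extension at `x = 1`. -/
theorem koenigsB_div_one_sub_limit (lam : ℝ) (h0 : 0 < lam) (h1 : lam < 1) :
    ∃ F : ℝ → ℝ, ContinuousOn F (Set.Icc 0 1) ∧
      (∀ x ∈ Set.Ico (0:ℝ) 1,
        F x = (lam - 1) / (Real.exp (lam * (x - 1)) - x) + 1 / (1 - x)) ∧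
      ∃ L : ℝ, 0 < L ∧ L = Real.exp (∫ x in (0:ℝ)..1, F x) ∧
        Tendsto (fun s => koenigsB lam s / (1 - s)) (nhdsWithin 1 (Set.Iio 1)) (nhds L) :=
  koenigsB_div_one_sub_limit_general lam h1
end

section
/- For every real x: e^{x} · ∑_{k=1}^{∞} (−1)^{k+1} x^{k}/(k·k!) = ∑_{n=1}^{∞} H_{n} · x^{n}/n!, where H_{n} = 1 + 1/2 + ⋯ + 1/n is the n-th harmonic number; equivalently, Ein(x) = e^{−x} ∑_{n=1}^{∞} H_{n} x^{n}/n!. -/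
/-!
Take the Cauchy product of the exponential series with the series of `Ein`. The coefficient of
`x^(n+1)/(n+1)!` is the alternating binomial sum `∑_{j=0}^{n} (-1)^j C(n+1, j+1)/(j+1)`, which is
`H_(n+1)`: by Pascal's rule, passing from `n` to `n+1` adds `∑_j (-1)^j C(n, j)/(j+1)`, and since
`C(n, j)/(j+1) = C(n+1, j+1)/(n+1)` this is `1/(n+1)` times an alternating sum of binomial
coefficients, i.e. `1/(n+1)`.
-/

open Finset
open scoped Nat

lemma sum_range_alternating_choose_div_succ (m : ℕ) :
    ∑ j ∈ range (m + 1), (-1 : ℚ) ^ j * m.choose j / (j + 1) = 1 / (m + 1) := by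
  have hchoose (j : ℕ) : (m.choose j : ℚ) / (j + 1) = (m + 1).choose (j + 1) / (m + 1) := by
    rw [div_eq_div_iff (by positivity) (by positivity), mul_comm]
    exact_mod_cast Nat.add_one_mul_choose_eq m j
  have halt : ∑ j ∈ range (m + 1), (-1 : ℚ) ^ j * (m + 1).choose (j + 1) = 1 := by
    have h : ∑ i ∈ range (m + 2), (-1 : ℚ) ^ i * (m + 1).choose i = 0 := by
      exact_mod_cast Int.alternating_sum_range_choose_of_ne m.succ_ne_zero
    rw [sum_range_succ'] at h
    simp only [pow_succ, mul_neg_one, neg_mul, sum_neg_distrib, pow_zero, Nat.choose_zero_right,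
      Nat.cast_one, one_mul] at h
    linarith
  simp_rw [mul_div_assoc, hchoose, ← mul_div_assoc, ← sum_div, halt]

theorem harmonic_eq_sum_range_alternating_choose (n : ℕ) :
    harmonic n = ∑ j ∈ range n, (-1 : ℚ) ^ j * n.choose (j + 1) / (j + 1) := by
  induction n with
  | zero => simp
  | succ n ih =>
    have hpascal (j : ℕ) : ((n + 1).choose (j + 1) : ℚ) = n.choose j + n.choose (j + 1) := by
      exact_mod_cast Nat.choose_succ_succ n j
    simp_rw [hpascal, mul_add, add_div, sum_add_distrib, sum_range_alternating_choose_div_succ]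
    rw [sum_range_succ _ n, Nat.choose_succ_self, ← ih, harmonic_succ]
    push_cast
    ring

noncomputable def einTerm (x : ℝ) (k : ℕ) : ℝ := (-1) ^ k * x ^ (k + 1) / ((k + 1) * (k + 1)!)

lemma pow_div_factorial_mul_einTerm (x : ℝ) (i j : ℕ) :
    x ^ i / i ! * einTerm x j =
      (-1) ^ j * (i + j + 1).choose (j + 1) / (j + 1) * (x ^ (i + j + 1) / (i + j + 1)!) := by
  have h : ((i + j + 1).choose (j + 1) : ℝ) * i ! * (j + 1)! = (i + j + 1)! := by
    exact_mod_cast Nat.add_choose_mul_factorial_mul_factorial i (j + 1)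
  have hchoose : ((i + j + 1).choose (j + 1) : ℝ) ≠ 0 :=
    Nat.cast_ne_zero.mpr (Nat.choose_pos (by omega)).ne'
  rw [einTerm, ← h]
  field_simp
  ring

lemma norm_einTerm_le (x : ℝ) (k : ℕ) : ‖einTerm x k‖ ≤ ‖x ^ (k + 1) / (k + 1)!‖ := by
  have hk : (1 : ℝ) ≤ k + 1 := by simp
  simp only [einTerm, norm_div, norm_mul, norm_pow, norm_neg, norm_one, one_pow, one_mul,
    Real.norm_natCast]
  rw [Real.norm_of_nonneg (by positivity : (0 : ℝ) ≤ k + 1)]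
  exact div_le_div_of_nonneg_left (by positivity) (by positivity)
    (le_mul_of_one_le_left (by positivity) hk)

lemma summable_norm_einTerm (x : ℝ) : Summable fun k => ‖einTerm x k‖ :=
  .of_nonneg_of_le (fun _ => norm_nonneg _) (norm_einTerm_le x)
    ((summable_nat_add_iff 1).mpr (NormedSpace.norm_expSeries_div_summable x))

lemma sum_antidiagonal_pow_div_factorial_mul_einTerm (x : ℝ) (n : ℕ) :
    ∑ p ∈ antidiagonal n, x ^ p.1 / p.1 ! * einTerm x p.2 =
      harmonic (n + 1) * x ^ (n + 1) / (n + 1)! := by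
  have hterm : ∀ p ∈ antidiagonal n, x ^ p.1 / p.1 ! * einTerm x p.2 =
      (-1) ^ p.2 * (n + 1).choose (p.2 + 1) / (p.2 + 1) * (x ^ (n + 1) / (n + 1)!) := by
    rintro ⟨i, j⟩ h
    rw [Finset.HasAntidiagonal.mem_antidiagonal] at h
    subst h
    exact pow_div_factorial_mul_einTerm x i j
  rw [sum_congr rfl hterm, ← sum_mul, ← Nat.sum_antidiagonal_swap]
  simp only [Prod.snd_swap]
  rw [Nat.sum_antidiagonal_eq_sum_range_succ_mk, harmonic_eq_sum_range_alternating_choose]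
  push_cast
  ring

/-- `Ein(x) = e^{-x} ∑_{n=1}^∞ H_n x^n/n!`, equivalently
`e^x ∑_{k=1}^∞ (-1)^{k+1} x^k/(k·k!) = ∑_{n=1}^∞ H_n x^n/n!`, where `H_n` is the
`n`-th harmonic number and `Ein` the modified exponential integral. -/
theorem exp_mul_Ein_eq_harmonic_series (x : ℝ) :
    HasSum
      (fun n : ℕ => (harmonic (n + 1) : ℝ) * x ^ (n + 1) / ((n + 1).factorial : ℝ))
      (Real.exp x *
        ∑' k : ℕ, (-1 : ℝ) ^ k * x ^ (k + 1) / (((k : ℝ) + 1) * ((k + 1).factorial : ℝ))) := by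
  have hcauchy := hasSum_sum_range_mul_of_summable_norm
    (NormedSpace.norm_expSeries_div_summable x) (summable_norm_einTerm x)
  have hexp : HasSum (fun n => x ^ n / n !) (Real.exp x) := by
    rw [Real.exp_eq_exp_ℝ]
    exact NormedSpace.expSeries_div_hasSum_exp x
  rw [hexp.tsum_eq] at hcauchy
  simp_rw [← Nat.sum_antidiagonal_eq_sum_range_succ fun i j => x ^ i / i ! * einTerm x j,
    sum_antidiagonal_pow_div_factorial_mul_einTerm] at hcauchy
  exact hcauchy
end
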